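/- For nonzero reals v₁,…,vₙ, the tanh rule decomposes as u = (∏ⱼ sign(vⱼ)) · φ⁻¹(Σⱼ φ(|vⱼ|)), where φ(x) = log(tanh(x/2)) for x > 0 and φ⁻¹(y) = 2 tanh⁻¹(e^y) for y < 0. -/

import Mathlib

open Real

/-- Inverse hyperbolic tangent on `(-1, 1)`. -/
noncomputable def artanh (x : ℝ) : ℝ := (1 / 2) * Real.log ((1 + x) / (1 - x))

/-- `φ(x) = log(tanh(x/2))` for `x > 0`. -/
noncomputable def phi (x : ℝ) : ℝ := Real.log (Real.tanh (x / 2))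

/-- Inverse of `φ` on negative reals: `φ⁻¹(y) = 2 artanh(e^y)`. -/
noncomputable def phiInv (y : ℝ) : ℝ := 2 * _root_.artanh (Real.exp y)

/-!
Since `tanh` is odd, `tanh (v / 2) = sign v * tanh (|v| / 2)`, so the product of the `tanh (vⱼ / 2)`
is `sign (∏ vⱼ)` times the product of the `tanh (|vⱼ| / 2) = exp (φ |vⱼ|)`, which is
`exp (∑ φ |vⱼ|)`. As `artanh` is odd as well, it commutes with multiplication by a sign.
-/

lemma Real.sign_mul (x y : ℝ) : Real.sign (x * y) = Real.sign x * Real.sign y := by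
  rcases lt_trichotomy x 0 with hx | rfl | hx <;> rcases lt_trichotomy y 0 with hy | rfl | hy <;>
    simp [Real.sign_of_neg, Real.sign_of_pos, mul_pos_of_neg_of_neg, mul_neg_of_pos_of_neg,
      mul_neg_of_neg_of_pos, *]

lemma Real.sign_prod {ι : Type*} (s : Finset ι) (x : ι → ℝ) :
    Real.sign (∏ i ∈ s, x i) = ∏ i ∈ s, Real.sign (x i) := by
  induction s using Finset.cons_induction with
  | empty => simp [Real.sign_one]
  | cons i s hi ih => rw [Finset.prod_cons, Finset.prod_cons, Real.sign_mul, ih]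

lemma tanh_pos_of_pos {x : ℝ} (hx : 0 < x) : 0 < Real.tanh x := by
  rw [Real.tanh_eq_sinh_div_cosh]
  exact div_pos (Real.sinh_pos_iff.mpr hx) (Real.cosh_pos x)

lemma tanh_eq_sign_mul_tanh_abs (x : ℝ) : Real.tanh x = Real.sign x * Real.tanh |x| := by
  rcases lt_trichotomy x 0 with hx | rfl | hx
  · rw [Real.sign_of_neg hx, abs_of_neg hx, Real.tanh_neg]; ring
  · simp
  · rw [Real.sign_of_pos hx, abs_of_pos hx, one_mul]

lemma tanh_half_eq_sign_mul (x : ℝ) :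
    Real.tanh (x / 2) = Real.sign x * Real.tanh (|x| / 2) := by
  rw [tanh_eq_sign_mul_tanh_abs, div_eq_mul_inv, Real.sign_mul,
    Real.sign_of_pos (by norm_num : (0 : ℝ) < 2⁻¹), mul_one, abs_mul, abs_inv, abs_two, ← div_eq_mul_inv]

lemma artanh_neg (x : ℝ) : _root_.artanh (-x) = -_root_.artanh x := by
  have hinv : (1 + -x) / (1 - -x) = ((1 + x) / (1 - x))⁻¹ := by
    rw [inv_div]; ring
  rw [_root_.artanh, _root_.artanh, hinv, Real.log_inv]; ring

lemma artanh_sign_mul (x y : ℝ) :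
    _root_.artanh (Real.sign x * y) = Real.sign x * _root_.artanh y := by
  rcases Real.sign_apply_eq x with h | h | h <;> rw [h]
  · rw [neg_one_mul, neg_one_mul, _root_.artanh_neg]
  · simp [_root_.artanh]
  · rw [one_mul, one_mul]

lemma exp_phi {x : ℝ} (hx : 0 < x) : Real.exp (phi x) = Real.tanh (x / 2) :=
  Real.exp_log (tanh_pos_of_pos (half_pos hx))

lemma phiInv_sum_phi {ι : Type*} (s : Finset ι) (x : ι → ℝ) (hx : ∀ i ∈ s, 0 < x i) :
    phiInv (∑ i ∈ s, phi (x i)) = 2 * _root_.artanh (∏ i ∈ s, Real.tanh (x i / 2)) := by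
  rw [phiInv, Real.exp_sum, Finset.prod_congr rfl fun i hi => exp_phi (hx i hi)]

theorem tanh_rule_decomposition (n : ℕ) (v : Fin n → ℝ) (hv : ∀ j, v j ≠ 0) :
    2 * _root_.artanh (∏ j, Real.tanh (v j / 2)) =
      (∏ j, Real.sign (v j)) * phiInv (∑ j, phi |v j|) := by
  have hsplit : ∏ j, Real.tanh (v j / 2) =
      Real.sign (∏ j, v j) * ∏ j, Real.tanh (|v j| / 2) := by
    rw [Real.sign_prod, ← Finset.prod_mul_distrib]
    exact Finset.prod_congr rfl fun j _ => tanh_half_eq_sign_mul (v j)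
  rw [hsplit, artanh_sign_mul, Real.sign_prod,
    phiInv_sum_phi _ _ fun j _ => abs_pos.mpr (hv j)]
  ring
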